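/- arXiv:math/0509187 — 7 statements merged into one kernel-verified Lean document; each statement's English description precedes it below -/
import Mathlib

section
/- Both roots ε of the polynomial ε² − ε − 1 give a common zero of the twelve generators of the Turaev–Viro ideal of type (2,1): setting a = ε^{-1/2} is not needed if one instead checks that the substitution ⟨112|122⟩ = a with a² = ε^{-1}, ⟨212|212⟩ = ε^{-1}, ⟨212|222⟩ = ε^{-1}, ⟨222|222⟩ = −ε^{-2}, w(2) = ε satisfies each of the twelve listed polynomial relations; concretely, with x = ⟨112|122⟩, y = ⟨212|212⟩, z = ⟨212|222⟩, t = ⟨222|222⟩, w = w(2), the assignment y = z = ε^{-1}, t = −ε^{-2}, w = ε, x² = ε^{-1} makes the following polynomials vanish: t² − z³ − w·t³; z² − z²·y − w·t²·z; z·y − w·z³; y·x − w·y²·x; z·x − w·z²·x; y² − y·x²; x² − y³ − w·z³; x − w·x³; −z·y² − w·t·z²; t·z − w·t·z²; z² − z·x²; z² − w·z²·y. -/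
/-! Write `u = ε⁻¹`. Then `ε² = ε + 1` becomes `u² + u = 1`, and `w = ε` is the inverse of `u`.
After substituting `y = z = u`, `t = -u²`, each generator lies in the ideal generated by
`u² + u - 1`, `x² - u` and `w u - 1`, so the relations hold in any commutative ring. -/

/-- The twelve generators of the Turaev–Viro ideal of type `(2,1)` vanish, where
`x = ⟨112|122⟩`, `y = ⟨212|212⟩`, `z = ⟨212|222⟩`, `t = ⟨222|222⟩` and `w = w(2)`. -/
def TuraevViroRelations {R : Type*} [CommRing R] (x y z t w : R) : Prop :=
  t^2 - z^3 - w*t^3 = 0 ∧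
  z^2 - z^2*y - w*t^2*z = 0 ∧
  z*y - w*z^3 = 0 ∧
  y*x - w*y^2*x = 0 ∧
  z*x - w*z^2*x = 0 ∧
  y^2 - y*x^2 = 0 ∧
  x^2 - y^3 - w*z^3 = 0 ∧
  x - w*x^3 = 0 ∧
  -(z*y^2) - w*t*z^2 = 0 ∧
  t*z - w*t*z^2 = 0 ∧
  z^2 - z*x^2 = 0 ∧
  z^2 - w*z^2*y = 0

theorem turaevViroRelations_of_mul_eq_one {R : Type*} [CommRing R] {x u w : R}
    (hwu : w * u = 1) (hu : u^2 + u = 1) (hx : x^2 = u) :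
    TuraevViroRelations x u u (-u^2) w := by
  refine ⟨?_, ?_, ?_, ?_, ?_, ?_, ?_, ?_, ?_, ?_, ?_, ?_⟩
  · linear_combination u^3 * hu + u^5 * hwu
  · linear_combination -u^2 * hu - u^4 * hwu
  · linear_combination -u^2 * hwu
  · linear_combination -u * x * hwu
  · linear_combination -u * x * hwu
  · linear_combination -u * hx
  · linear_combination -u * hu - u^2 * hwu + hx
  · linear_combination -w * x * hx - x * hwu
  · linear_combination u^3 * hwu
  · linear_combination u^3 * hwu
  · linear_combination -u * hx
  · linear_combination -u^2 * hwu

theorem inv_eq_sub_one_of_sq_eq_add_one {K : Type*} [DivisionRing K] {ε : K}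
    (hε : ε^2 = ε + 1) : ε⁻¹ = ε - 1 :=
  inv_eq_of_mul_eq_one_right (by rw [mul_sub, mul_one, ← sq, hε, add_sub_cancel_left])

theorem epsilon_solution_of_tv_relations_general {k : Type*} [Field k]
    (ε x y z t w : k) (hε : ε^2 = ε + 1)
    (hx : x^2 = ε⁻¹) (hy : y = ε⁻¹) (hz : z = ε⁻¹)
    (ht : t = -((ε^2)⁻¹)) (hw : w = ε) :
    t^2 - z^3 - w*t^3 = 0 ∧
    z^2 - z^2*y - w*t^2*z = 0 ∧
    z*y - w*z^3 = 0 ∧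
    y*x - w*y^2*x = 0 ∧
    z*x - w*z^2*x = 0 ∧
    y^2 - y*x^2 = 0 ∧
    x^2 - y^3 - w*z^3 = 0 ∧
    x - w*x^3 = 0 ∧
    -(z*y^2) - w*t*z^2 = 0 ∧
    t*z - w*t*z^2 = 0 ∧
    z^2 - z*x^2 = 0 ∧
    z^2 - w*z^2*y = 0 := by
  have hinv := inv_eq_sub_one_of_sq_eq_add_one hε
  have hwu : w * ε⁻¹ = 1 := by rw [hw, hinv]; linear_combination hε
  have hu : (ε⁻¹)^2 + ε⁻¹ = 1 := by rw [hinv]; linear_combination hε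
  rw [← inv_pow] at ht
  subst hy hz ht
  exact turaevViroRelations_of_mul_eq_one hwu hu hx

/-- The ε-invariant evaluation satisfies all twelve generators of the
Turaev--Viro ideal of type (2,1): if `ε² = ε + 1`, `x² = ε⁻¹`,
`y = z = ε⁻¹`, `t = −ε⁻²`, `w = ε`, the twelve polynomials vanish. -/
theorem epsilon_solution_of_tv_relations {k : Type*} [Field k]
    (ε x y z t w : k) (hε0 : ε ≠ 0) (hε : ε^2 = ε + 1)
    (hx : x^2 = ε⁻¹) (hy : y = ε⁻¹) (hz : z = ε⁻¹)
    (ht : t = -((ε^2)⁻¹)) (hw : w = ε) :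
    t^2 - z^3 - w*t^3 = 0 ∧
    z^2 - z^2*y - w*t^2*z = 0 ∧
    z*y - w*z^3 = 0 ∧
    y*x - w*y^2*x = 0 ∧
    z*x - w*z^2*x = 0 ∧
    y^2 - y*x^2 = 0 ∧
    x^2 - y^3 - w*z^3 = 0 ∧
    x - w*x^3 = 0 ∧
    -(z*y^2) - w*t*z^2 = 0 ∧
    t*z - w*t*z^2 = 0 ∧
    z^2 - z*x^2 = 0 ∧
    z^2 - w*z^2*y = 0 :=
  epsilon_solution_of_tv_relations_general ε x y z t w hε hx hy hz ht hw
end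

section
/- In the polynomial ring ℚ[x, y, z, t, w], the polynomial x² − y lies in the radical of the ideal I generated by the twelve Turaev–Viro relations: t² − z³ − w·t³; z² − z²·y − w·t²·z; z·y − w·z³; y·x − w·y²·x; z·x − w·z²·x; y² − y·x²; x² − y³ − w·z³; x − w·x³; −z·y² − w·t·z²; t·z − w·t·z²; z² − z·x²; z² − w·z²·y. -/
open MvPolynomial

/-- `x = ⟨112|122⟩` -/
noncomputable def x : MvPolynomial (Fin 5) ℚ := X 0
/-- `y = ⟨212|212⟩` -/
noncomputable def y : MvPolynomial (Fin 5) ℚ := X 1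
/-- `z = ⟨212|222⟩` -/
noncomputable def z : MvPolynomial (Fin 5) ℚ := X 2
/-- `t = ⟨222|222⟩` -/
noncomputable def t : MvPolynomial (Fin 5) ℚ := X 3
/-- `w = w(2)` -/
noncomputable def w : MvPolynomial (Fin 5) ℚ := X 4

/-- The twelve generators of the Turaev--Viro ideal of type (2,1). -/
noncomputable def tvGens : Set (MvPolynomial (Fin 5) ℚ) :=
  { t^2 - z^3 - w*t^3,
    z^2 - z^2*y - w*t^2*z,
    z*y - w*z^3,
    y*x - w*y^2*x,
    z*x - w*z^2*x,
    y^2 - y*x^2,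
    x^2 - y^3 - w*z^3,
    x - w*x^3,
    -(z*y^2) - w*t*z^2,
    t*z - w*t*z^2,
    z^2 - z*x^2,
    z^2 - w*z^2*y }

/-
Work in any commutative ring where the relations hold. From the `t`- and `y`-relations one gets
`z³ = -t z` and then `z³ = w z⁴`, which together with `z² = z x² = w z² y` kills `w z³ (x² - y)`.
Since `y² = y x²` and `x² = y³ + w z³`, the square `(x² - y)²` reduces to `(y³ + w z³)(x² - y)`,
and `y³ (x² - y) = -y² (y² - y x²)` vanishes as well.
-/

section Relations

variable {R : Type*} [CommRing R] {x y z t w : R}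

theorem z_pow_three_add_t_mul_z_eq_zero (h3 : z * y = w * z ^ 3) (h9 : -(z * y ^ 2) = w * t * z ^ 2)
    (h10 : t * z = w * t * z ^ 2) (h12 : z ^ 2 = w * z ^ 2 * y) : z ^ 3 + t * z = 0 := by
  linear_combination h10 - h9 - y * h3 + z * h12

theorem z_pow_three_eq_w_mul_z_pow_four (h3 : z * y = w * z ^ 3)
    (h9 : -(z * y ^ 2) = w * t * z ^ 2) (h10 : t * z = w * t * z ^ 2)
    (h12 : z ^ 2 = w * z ^ 2 * y) : z ^ 3 = w * z ^ 4 := by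
  linear_combination (1 - w * z) * z_pow_three_add_t_mul_z_eq_zero h3 h9 h10 h12 - h10

theorem w_mul_z_pow_three_mul_pow_two_sub_eq_zero (h3 : z * y = w * z ^ 3)
    (h9 : -(z * y ^ 2) = w * t * z ^ 2) (h10 : t * z = w * t * z ^ 2) (h11 : z ^ 2 = z * x ^ 2)
    (h12 : z ^ 2 = w * z ^ 2 * y) : w * z ^ 3 * (x ^ 2 - y) = 0 := by
  linear_combination -(w * z ^ 2) * h11 - z_pow_three_eq_w_mul_z_pow_four h3 h9 h10 h12 + z * h12

theorem sq_pow_two_sub_eq_zero (h3 : z * y = w * z ^ 3) (h6 : y ^ 2 = y * x ^ 2)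
    (h7 : x ^ 2 = y ^ 3 + w * z ^ 3) (h9 : -(z * y ^ 2) = w * t * z ^ 2)
    (h10 : t * z = w * t * z ^ 2) (h11 : z ^ 2 = z * x ^ 2) (h12 : z ^ 2 = w * z ^ 2 * y) :
    (x ^ 2 - y) ^ 2 = 0 := by
  linear_combination (1 - y ^ 2) * h6 + (x ^ 2 - y) * h7 +
    w_mul_z_pow_three_mul_pow_two_sub_eq_zero h3 h9 h10 h11 h12

end Relations

/-- `x² − y` lies in the radical of the Turaev--Viro ideal of type (2,1). -/
theorem xsq_sub_y_mem_radical : x^2 - y ∈ (Ideal.span tvGens).radical := by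
  let π := Ideal.Quotient.mk (Ideal.span tvGens)
  have rel : ∀ p q, p - q ∈ tvGens → π p = π q := fun p q h ↦
    Ideal.Quotient.eq.mpr (Ideal.subset_span h)
  have h3 := rel (z * y) (w * z ^ 3) (by simp [tvGens])
  have h6 := rel (y ^ 2) (y * x ^ 2) (by simp [tvGens])
  have h7 := rel (x ^ 2) (y ^ 3 + w * z ^ 3) (by simp [tvGens, sub_add_eq_sub_sub])
  have h9 := rel (-(z * y ^ 2)) (w * t * z ^ 2) (by simp [tvGens])
  have h10 := rel (t * z) (w * t * z ^ 2) (by simp [tvGens])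
  have h11 := rel (z ^ 2) (z * x ^ 2) (by simp [tvGens])
  have h12 := rel (z ^ 2) (w * z ^ 2 * y) (by simp [tvGens])
  simp only [map_mul, map_pow, map_add, map_neg] at h3 h6 h7 h9 h10 h11 h12
  refine ⟨2, Ideal.Quotient.eq_zero_iff_mem.mp ?_⟩
  simpa only [map_pow, map_sub] using sq_pow_two_sub_eq_zero h3 h6 h7 h9 h10 h11 h12
end

section
/- The Turaev–Viro ideal I ⊆ ℚ[x, y, z, t, w] generated by the twelve polynomials t² − z³ − w·t³; z² − z²·y − w·t²·z; z·y − w·z³; y·x − w·y²·x; z·x − w·z²·x; y² − y·x²; x² − y³ − w·z³; x − w·x³; −z·y² − w·t·z²; t·z − w·t·z²; z² − z·x²; z² − w·z²·y is not a radical ideal; specifically, x² − y ∈ √I but x² − y ∉ I. -/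
/-!
Every generator lies in the ideal `(x, z, t, w, y²)`, i.e. vanishes at the dual-number point
`x = z = t = w = 0`, `y = ε`, whereas `x² − y` evaluates to `−ε ≠ 0`; so `x² − y ∉ I`.
On the other hand `(x² − y)²` is an explicit combination of three of the generators.
-/

open MvPolynomial

open DualNumber

theorem Ideal.notMem_span_of_map_eq_zero {R S : Type*} [Semiring R] [Semiring S]
    (f : R →+* S) {s : Set R} (hs : ∀ g ∈ s, f g = 0) {a : R} (ha : f a ≠ 0) :
    a ∉ Ideal.span s :=
  fun h => ha ((Ideal.span_le (I := RingHom.ker f)).mpr hs h)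

lemma aeval_eps_eq_zero_of_mem_tvGens :
    ∀ g ∈ tvGens, aeval ![0, (ε : DualNumber ℚ), 0, 0, 0] g = 0 := by
  simp only [tvGens, Set.mem_insert_iff, Set.mem_singleton_iff]
  rintro g (rfl | rfl | rfl | rfl | rfl | rfl | rfl | rfl | rfl | rfl | rfl | rfl) <;>
    simp [x, y, z, t, w, pow_succ, eps_mul_eps]

lemma x_sq_sub_y_notMem_span_tvGens : x^2 - y ∉ Ideal.span tvGens := by
  refine Ideal.notMem_span_of_map_eq_zero
    (aeval ![0, (ε : DualNumber ℚ), 0, 0, 0]).toRingHom aeval_eps_eq_zero_of_mem_tvGens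
    fun h => ?_
  simpa [x, y] using congrArg TrivSqZeroExt.snd h

lemma x_sq_sub_y_sq_mem_span_tvGens : (x^2 - y)^2 ∈ Ideal.span tvGens := by
  have hzy : z*y - w*z^3 ∈ Ideal.span tvGens := Ideal.subset_span (by simp [tvGens])
  have hyx : y^2 - y*x^2 ∈ Ideal.span tvGens := Ideal.subset_span (by simp [tvGens])
  have hx : x^2 - y^3 - w*z^3 ∈ Ideal.span tvGens := Ideal.subset_span (by simp [tvGens])
  have key : (x^2 - y)^2 =
      (x^2 - y) * ((x^2 - y^3 - w*z^3) - (z*y - w*z^3)) + (1 - y^2 - z) * (y^2 - y*x^2) := by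
    ring
  rw [key]
  exact add_mem (Ideal.mul_mem_left _ _ (sub_mem hx hzy)) (Ideal.mul_mem_left _ _ hyx)

/-- The Turaev--Viro ideal of type (2,1) is not radical:
`x² − y ∈ √I` but `x² − y ∉ I`. -/
theorem tvIdeal_not_radical :
    x^2 - y ∈ (Ideal.span tvGens).radical ∧
    x^2 - y ∉ Ideal.span tvGens ∧
    ¬ (Ideal.span tvGens).IsRadical :=
  ⟨⟨2, x_sq_sub_y_sq_mem_span_tvGens⟩, x_sq_sub_y_notMem_span_tvGens,
    fun h => x_sq_sub_y_notMem_span_tvGens (h ⟨2, x_sq_sub_y_sq_mem_span_tvGens⟩)⟩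
end

section
/- In ℚ[x, y, z, t, w], the ideal J generated by the fourteen polynomials t·z − z·w + 2z; z² − z·w + z; z·y − z·w + z; y² − y·w + z; x² − y; z·w² − z·w − z; y·w² − z·w − y; −x + x·w² + y·x − z·x − w·x; t²·w − z − t; y·x + w·z·x − w·x; w·y·x − x·w² − y·x + z·x + w·x; y·t² − y·t·w + 2z·w − 4z; x·t² − w·x·t + x·w² + 3y·x + z·x − 3w·x − x; t·y·x − w·x·t + y·x + z·x − w·x contains the ideal I generated by the twelve polynomials t² − z³ − w·t³; z² − z²·y − w·t²·z; z·y − w·z³; y·x − w·y²·x; z·x − w·z²·x; y² − y·x²; x² − y³ − w·z³; x − w·x³; −z·y² − w·t·z²; t·z − w·t·z²; z² − z·x²; z² − w·z²·y. -/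
open MvPolynomial

/-- The fourteen generators of `√I` (the listed Gröbner base of the radical). -/
noncomputable def radGens : Set (MvPolynomial (Fin 5) ℚ) :=
  { t*z - z*w + 2*z,
    z^2 - z*w + z,
    z*y - z*w + z,
    y^2 - y*w + z,
    x^2 - y,
    z*w^2 - z*w - z,
    y*w^2 - z*w - y,
    -x + x*w^2 + y*x - z*x - w*x,
    t^2*w - z - t,
    y*x + w*z*x - w*x,
    w*y*x - x*w^2 - y*x + z*x + w*x,
    y*t^2 - y*t*w + 2*z*w - 4*z,
    x*t^2 - w*x*t + x*w^2 + 3*y*x + z*x - 3*w*x - x,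
    t*y*x - w*x*t + y*x + z*x - w*x }

-- `hᵢ` is the relation given by the `i`-th element of `radGens`.
theorem tvRelations_of_radRelations {R : Type*} [CommRing R] {x y z t w : R}
    (h₁ : t*z - z*w + 2*z = 0) (h₂ : z^2 - z*w + z = 0) (h₃ : z*y - z*w + z = 0)
    (h₄ : y^2 - y*w + z = 0) (h₅ : x^2 - y = 0) (h₆ : z*w^2 - z*w - z = 0)
    (h₇ : y*w^2 - z*w - y = 0) (h₈ : -x + x*w^2 + y*x - z*x - w*x = 0) (h₉ : t^2*w - z - t = 0)
    (h₁₁ : w*y*x - x*w^2 - y*x + z*x + w*x = 0) :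
    t^2 - z^3 - w*t^3 = 0 ∧ z^2 - z^2*y - w*t^2*z = 0 ∧ z*y - w*z^3 = 0 ∧
      y*x - w*y^2*x = 0 ∧ z*x - w*z^2*x = 0 ∧ y^2 - y*x^2 = 0 ∧ x^2 - y^3 - w*z^3 = 0 ∧
      x - w*x^3 = 0 ∧ -(z*y^2) - w*t*z^2 = 0 ∧ t*z - w*t*z^2 = 0 ∧ z^2 - z*x^2 = 0 ∧
      z^2 - w*z^2*y = 0 := by
  refine ⟨?_, ?_, ?_, ?_, ?_, ?_, ?_, ?_, ?_, ?_, ?_, ?_⟩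
  · linear_combination -h₁ + (1 - w - z) * h₂ - h₆ - t * h₉
  · linear_combination (2*w - w^2 - t*w) * h₁ + (1 - y) * h₂ + (1 - w) * h₃ + (2 - w) * h₆
  · linear_combination (w - w^2 - z*w) * h₂ + h₃ + (1 - w) * h₆
  · linear_combination -x*w * h₄ - x * h₇
  · linear_combination -x*w * h₂ - x * h₆
  · linear_combination -y * h₅
  · linear_combination (w - w^2 - z*w) * h₂ + h₃ - (w + y) * h₄ + h₅ + (1 - w) * h₆ - h₇
  · linear_combination -x*w * h₅ - h₈ - h₁₁
  · linear_combination -z*w * h₁ + (2*w - w^2) * h₂ + (1 - w - y) * h₃ + (1 - w) * h₆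
  · linear_combination (1 - z*w) * h₁ + (2*w - w^2) * h₂ + (2 - w) * h₆
  · linear_combination h₂ - h₃ - z * h₅
  · linear_combination (1 - y*w) * h₂ + (w - w^2) * h₃ + (1 - w) * h₆

/-- The ideal generated by the twelve Turaev--Viro relations is contained in the
ideal generated by the fourteen listed radical generators. -/
theorem tvIdeal_le_radIdeal : Ideal.span tvGens ≤ Ideal.span radGens := by
  set J := Ideal.span radGens
  -- Membership in `J` is vanishing in `_ ⧸ J`, where the generators of `J` become relations.
  have hrad : ∀ p ∈ radGens, Ideal.Quotient.mk J p = 0 := fun p hp =>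
    Ideal.Quotient.eq_zero_iff_mem.2 (Ideal.subset_span hp)
  simp only [radGens, Set.forall_mem_insert, Set.mem_singleton_iff, forall_eq, map_sub, map_add,
    map_mul, map_pow, map_neg, map_ofNat] at hrad
  obtain ⟨h₁, h₂, h₃, h₄, h₅, h₆, h₇, h₈, h₉, -, h₁₁, -⟩ := hrad
  have htv := tvRelations_of_radRelations h₁ h₂ h₃ h₄ h₅ h₆ h₇ h₈ h₉ h₁₁
  rw [Ideal.span_le]
  simp only [tvGens, Set.insert_subset_iff, Set.singleton_subset_iff, SetLike.mem_coe,
    ← Ideal.Quotient.eq_zero_iff_mem, map_sub, map_mul, map_pow, map_neg]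
  exact htv
end

section
/- Every common zero (x, y, z, t, w) over an algebraically closed field of characteristic 0 of the twelve polynomials t² − z³ − w·t³; z² − z²·y − w·t²·z; z·y − w·z³; y·x − w·y²·x; z·x − w·z²·x; y² − y·x²; x² − y³ − w·z³; x − w·x³; −z·y² − w·t·z²; t·z − w·t·z²; z² − z·x²; z² − w·z²·y satisfies x² = y. -/
theorem eq_of_mul_self_eq_mul_of_dvd {M : Type*} [MonoidWithZero M] [IsLeftCancelMulZero M]
    {a b : M} (h : b * b = b * a) (hdvd : b ∣ a) : a = b := by
  rcases eq_or_ne b 0 with rfl | hb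
  · exact zero_dvd_iff.mp hdvd
  · exact (mul_left_cancel₀ hb h).symm

theorem xsq_eq_y_on_variety_general {k : Type*} [Field k]
    (x y z w : k)
    (h3 : z*y - w*z^3 = 0)
    (h6 : y^2 - y*x^2 = 0)
    (h7 : x^2 - y^3 - w*z^3 = 0) :
    x^2 = y := by
  have hdvd : y ∣ x^2 := ⟨y^2 + z, by linear_combination h7 - h3⟩
  exact eq_of_mul_self_eq_mul_of_dvd (by linear_combination h6) hdvd

/-- Every common zero over an algebraically closed field of characteristic 0 of
the twelve Turaev--Viro relations of type (2,1) satisfies `x² = y`. -/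
theorem xsq_eq_y_on_variety {k : Type*} [Field k] [IsAlgClosed k] [CharZero k]
    (x y z t w : k)
    (h1 : t^2 - z^3 - w*t^3 = 0)
    (h2 : z^2 - z^2*y - w*t^2*z = 0)
    (h3 : z*y - w*z^3 = 0)
    (h4 : y*x - w*y^2*x = 0)
    (h5 : z*x - w*z^2*x = 0)
    (h6 : y^2 - y*x^2 = 0)
    (h7 : x^2 - y^3 - w*z^3 = 0)
    (h8 : x - w*x^3 = 0)
    (h9 : -(z*y^2) - w*t*z^2 = 0)
    (h10 : t*z - w*t*z^2 = 0)
    (h11 : z^2 - z*x^2 = 0)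
    (h12 : z^2 - w*z^2*y = 0) :
    x^2 = y :=
  xsq_eq_y_on_variety_general x y z w h3 h6 h7
end

section
/- If f, g ∈ R are polynomials and I ⊆ R an ideal such that the normal forms (unique coset representatives) of f·g + I and of (Nf(f))·(Nf(g)) + I agree for all f, g precisely when multiplication descends, then: in ℚ[x, y, z, t, w] with the ideal I generated by the twelve Turaev–Viro relations of type (2,1), the element (w³t² + 2z² − zt + 1)² is NOT congruent modulo I to w³t² + 3y² + 7z² − 6tz + 1. Equivalently, the polynomial (w³t² + 2z² − zt + 1)² − (w³t² + 3y² + 7z² − 6tz + 1) does not lie in I. -/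
open MvPolynomial

theorem MvPolynomial.notMem_span_of_eval_ne_zero {σ R : Type*} [CommSemiring R]
    {S : Set (MvPolynomial σ R)} {p : MvPolynomial σ R} (a : σ → R)
    (hS : ∀ q ∈ S, eval a q = 0) (hp : eval a p ≠ 0) : p ∉ Ideal.span S := by
  have hle : Ideal.span S ≤ RingHom.ker (eval a) :=
    Ideal.span_le.mpr fun q hq => RingHom.mem_ker.mpr (hS q hq)
  exact fun hmem => hp (RingHom.mem_ker.mp (hle hmem))

def tvZero : Fin 5 → ℚ := ![0, 0, 0, 1, 1]

theorem eval_tvZero_of_mem_tvGens {q : MvPolynomial (Fin 5) ℚ} (hq : q ∈ tvGens) :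
    eval tvZero q = 0 := by
  simp only [tvGens, Set.mem_insert_iff, Set.mem_singleton_iff] at hq
  rcases hq with rfl | rfl | rfl | rfl | rfl | rfl | rfl | rfl | rfl | rfl | rfl | rfl <;>
    simp [tvZero, x, y, z, t, w]

/-- Non-multiplicativity under connected sum: the square of the normal form of
`TV(L(8,3))` is not congruent mod the Turaev--Viro ideal to the normal form of
`TV(L(8,3) # L(8,3))`. -/
theorem tv_not_multiplicative :
    (w^3*t^2 + 2*z^2 - z*t + 1)^2 - (w^3*t^2 + 3*y^2 + 7*z^2 - 6*t*z + 1)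
      ∉ Ideal.span tvGens := by
  refine notMem_span_of_eval_ne_zero tvZero (fun q => eval_tvZero_of_mem_tvGens) ?_
  -- at `(x, y, z, t, w) = (0, 0, 0, 1, 1)` the difference is `2 ^ 2 - 2`
  simp [tvZero, y, z, t, w]
  norm_num
end

section
/- The polynomials p₁ = w³t² + 2z² − zt + 1 (normal form for L(8,3)) and p₂ = w³t² − z² + tz + 1 (normal form for L(7,2)) are distinct modulo the Turaev–Viro ideal I of type (2,1); i.e., p₁ − p₂ = 3z² − 2zt ∉ I, where I ⊆ ℚ[x,y,z,t,w] is generated by t² − z³ − w·t³; z² − z²·y − w·t²·z; z·y − w·z³; y·x − w·y²·x; z·x − w·z²·x; y² − y·x²; x² − y³ − w·z³; x − w·x³; −z·y² − w·t·z²; t·z − w·t·z²; z² − z·x²; z² − w·z²·y. -/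
/-!
Evaluate at the point of Matveev's ε-invariant with `ε = φ`, the golden ratio:
`w = φ`, `y = z = φ⁻¹`, `t = -φ⁻²`, `x = √φ⁻¹`. It is a common zero of the ideal
(`z² + z = 1` is `φ² = φ + 1`), while `3z² - 2zt = 3φ⁻² + 2φ⁻³ > 0` there.
-/

open MvPolynomial

theorem Ideal.notMem_span_of_map_eq_zero_s16 {R A F : Type*} [Semiring R] [Semiring A]
    [FunLike F R A] [RingHomClass F R A] (g : F) {S : Set R} {p : R}
    (hS : ∀ q ∈ S, g q = 0) (hp : g p ≠ 0) : p ∉ Ideal.span S := fun hmem =>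
  hp <| (Ideal.span_le (I := RingHom.ker g)).mpr hS hmem

theorem aeval_eq_zero_of_mem_tvGens {A : Type*} [CommRing A] [Algebra ℚ A] {a c e : A}
    (ha : a ^ 2 = c) (hc : c ^ 2 + c = 1) (he : e * c = 1) :
    ∀ q ∈ tvGens, aeval ![a, c, c, -c ^ 2, e] q = 0 := by
  intro q hq
  simp only [tvGens, Set.mem_insert_iff, Set.mem_singleton_iff] at hq
  rcases hq with rfl | rfl | rfl | rfl | rfl | rfl | rfl | rfl | rfl | rfl | rfl | rfl <;>
    simp only [x, y, z, t, w, map_sub, map_neg, map_mul, map_pow, aeval_X, Matrix.cons_val,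
      Matrix.cons_val_zero, Matrix.cons_val_one] <;> grind

open Real goldenRatio in
/-- The normal forms for `L(8,3)` and `L(7,2)` differ mod the Turaev--Viro ideal:
their difference `3z² − 2zt` is not in the ideal. -/
theorem tv_distinguishes_L83_L72 :
    (w^3*t^2 + 2*z^2 - z*t + 1) - (w^3*t^2 - z^2 + t*z + 1) = 3*z^2 - 2*z*t ∧
    3*z^2 - 2*z*t ∉ Ideal.span tvGens := by
  refine ⟨by ring, ?_⟩
  have hc : φ⁻¹ ^ 2 + φ⁻¹ = 1 := by
    rw [inv_goldenRatio]; linear_combination goldenConj_sq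
  have ha : √φ⁻¹ ^ 2 = φ⁻¹ := Real.sq_sqrt (inv_nonneg.mpr goldenRatio_pos.le)
  refine Ideal.notMem_span_of_map_eq_zero_s16 (aeval ![√φ⁻¹, φ⁻¹, φ⁻¹, -φ⁻¹ ^ 2, φ])
    (aeval_eq_zero_of_mem_tvGens ha hc (mul_inv_cancel₀ goldenRatio_ne_zero)) ?_
  have hval : aeval ![√φ⁻¹, φ⁻¹, φ⁻¹, -φ⁻¹ ^ 2, φ] (3*z^2 - 2*z*t) =
      3 * φ⁻¹ ^ 2 + 2 * φ⁻¹ ^ 3 := by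
    simp only [z, t, map_sub, map_mul, map_pow, map_ofNat, aeval_X, Matrix.cons_val]
    ring
  rw [hval]
  positivity
end
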